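/- Let A = (a₁ … a_m)* where a₁,…,a_m are independent random vectors each uniformly distributed on B_p(0,r) ⊂ ℂ^p, r > 0. Then for all u ∈ ℂ^p \ {0}, v ∈ ℂ^m, and δ > 0: P[ ‖A u + v‖₂ < δ ] ≤ C(p,m,r) · δ^{2m} / ‖u‖₂^{2m}, with C(p,m,r) = (π V_{p−1}(r)/V_p(r))^m. -/

import Mathlib

open scoped BigOperators Matrix

noncomputable def vnorm2 {m : ℕ} (x : Fin m → ℂ) : ℝ :=
  Real.sqrt (∑ i, ‖x i‖ ^ 2)

noncomputable def vnorm1 {m : ℕ} (x : Fin m → ℂ) : ℝ :=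
  ∑ i, ‖x i‖

noncomputable def opnorm2 {m n : ℕ} (A : Matrix (Fin m) (Fin n) ℂ) : ℝ :=
  sSup {c | ∃ x : Fin n → ℂ, vnorm2 x = 1 ∧ c = vnorm2 (A.mulVec x)}

noncomputable def opnorm1 {m n : ℕ} (A : Matrix (Fin m) (Fin n) ℂ) : ℝ :=
  sSup {c | ∃ x : Fin n → ℂ, vnorm1 x = 1 ∧ c = vnorm1 (A.mulVec x)}

noncomputable def frobNorm {m n : ℕ} (A : Matrix (Fin m) (Fin n) ℂ) : ℝ :=
  Real.sqrt (∑ i, ∑ j, ‖A i j‖ ^ 2)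

def Dmat {m : ℕ} (P : Finset (Fin m)) : Matrix (Fin m) (Fin m) ℂ :=
  Matrix.diagonal (fun i => if i ∈ P then 1 else 0)

noncomputable def dft (m : ℕ) : Matrix (Fin m) (Fin m) ℂ :=
  fun k l => (1 / Real.sqrt m : ℝ) *
    Complex.exp (-2 * Real.pi * Complex.I * (k.1 + 1) * (l.1 + 1) / m)

open MeasureTheory ProbabilityTheory

def ballC (p : ℕ) (r : ℝ) : Set (Fin p → ℂ) := {b | vnorm2 b ≤ r}

noncomputable def Vball (k : ℕ) (r : ℝ) : ℝ := (volume (ballC k r)).toReal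

/-! Each coordinate of `A u + v` is `a_i* u + v_i`, so the event forces every row `a_i` into the
slab `{a | ‖a* u + v_i‖ < δ}`, and by independence its probability is at most the product of the
probabilities of these row events. For a single row, a unitary change of coordinates taking
`u / ‖u‖` to the first basis vector preserves Lebesgue measure (it fixes the unit ball, and Haar
measure is unique up to a scalar) and turns the slab into `{y | y₀ ∈ D}` for a disc `D` of radius
`δ / ‖u‖`. Its intersection with `B_p(0, r)` lies in `D × B_{p-1}(0, r)`, of volume
`π (δ / ‖u‖)² V_{p-1}(r)`, and dividing by `V_p(r)` gives one factor of the bound. -/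

open ComplexConjugate
open scoped ENNReal NNReal

lemma vnorm2_eq_norm_toLp {p : ℕ} (x : Fin p → ℂ) : vnorm2 x = ‖WithLp.toLp 2 x‖ := by
  rw [EuclideanSpace.norm_eq]; rfl

lemma norm_apply_le_vnorm2 {p : ℕ} (x : Fin p → ℂ) (i : Fin p) : ‖x i‖ ≤ vnorm2 x := by
  rw [vnorm2_eq_norm_toLp]
  exact PiLp.norm_apply_le (WithLp.toLp 2 x) i

lemma vnorm2_pos {p : ℕ} {x : Fin p → ℂ} (hx : x ≠ 0) : 0 < vnorm2 x := by
  rw [vnorm2_eq_norm_toLp, norm_pos_iff]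
  exact fun h => hx (by simpa using congrArg WithLp.ofLp h)

lemma vnorm2_nonneg {p : ℕ} (x : Fin p → ℂ) : 0 ≤ vnorm2 x := Real.sqrt_nonneg _

lemma continuous_vnorm2 {p : ℕ} : Continuous (vnorm2 (m := p)) := by
  simp_rw [funext vnorm2_eq_norm_toLp]
  fun_prop

lemma vnorm2_tail_le {q : ℕ} (x : Fin (q + 1) → ℂ) : vnorm2 (Fin.tail x) ≤ vnorm2 x := by
  unfold vnorm2
  gcongr
  rw [Fin.sum_univ_succ]
  exact le_add_of_nonneg_left (sq_nonneg _)

lemma measurableSet_ballC (p : ℕ) (r : ℝ) : MeasurableSet (ballC p r) :=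
  measurableSet_le continuous_vnorm2.measurable measurable_const

lemma volume_ballC_lt_top (p : ℕ) (r : ℝ) : volume (ballC p r) < ∞ := by
  have hsub : ballC p r ⊆ Metric.closedBall 0 r := fun x hx =>
    mem_closedBall_zero_iff.2 <| (pi_norm_le_iff_of_nonneg ((vnorm2_nonneg x).trans hx)).2
      fun i => (norm_apply_le_vnorm2 x i).trans hx
  exact (measure_mono hsub).trans_lt measure_closedBall_lt_top

lemma ofReal_Vball (p : ℕ) (r : ℝ) : ENNReal.ofReal (Vball p r) = volume (ballC p r) :=
  ENNReal.ofReal_toReal (volume_ballC_lt_top p r).ne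

lemma volume_ballC_pos (p : ℕ) {r : ℝ} (hr : 0 < r) : 0 < volume (ballC p r) := by
  have hopen : IsOpen {x : Fin p → ℂ | vnorm2 x < r} := isOpen_lt continuous_vnorm2 continuous_const
  have hzero : vnorm2 (0 : Fin p → ℂ) < r := by simpa [vnorm2] using hr
  exact (hopen.measure_pos volume ⟨0, hzero⟩).trans_le
    (measure_mono fun x (hx : vnorm2 x < r) => hx.le)

theorem MeasureTheory.Measure.map_addHaar_eq_self_of_preimage_eq {R E : Type*} [Semiring R]
    [AddCommGroup E] [Module R E] [TopologicalSpace E] [IsTopologicalAddGroup E]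
    [LocallyCompactSpace E] [SecondCountableTopology E] [MeasurableSpace E] [BorelSpace E]
    (μ : Measure E) [μ.IsAddHaarMeasure] (L : E ≃L[R] E) {s : Set E} (hs : MeasurableSet s)
    (h0 : μ s ≠ 0) (htop : μ s ≠ ∞) (hL : L ⁻¹' s = s) : μ.map L = μ := by
  have hunique := isAddLeftInvariant_eq_smul (μ.map L) μ
  have hs_eq : μ.map L s = μ s := by rw [map_apply L.continuous.measurable hs, hL]
  rw [hunique, smul_apply, ENNReal.smul_def, smul_eq_mul] at hs_eq
  have hfactor : addHaarScalarFactor (μ.map L) μ = 1 := by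
    exact_mod_cast (ENNReal.mul_eq_right h0 htop).1 hs_eq
  rw [hunique, hfactor, one_smul]

theorem OrthonormalBasis.exists_apply_zero_eq {𝕜 E : Type*} [RCLike 𝕜] [NormedAddCommGroup E]
    [InnerProductSpace 𝕜 E] [FiniteDimensional 𝕜 E] {n : ℕ} (hn : Module.finrank 𝕜 E = n + 1)
    {e : E} (he : ‖e‖ = 1) : ∃ B : OrthonormalBasis (Fin (n + 1)) 𝕜 E, B 0 = e := by
  have : Subsingleton ({0} : Set (Fin (n + 1))) := Set.subsingleton_singleton.coe_sort
  have hortho : Orthonormal 𝕜 (({0} : Set (Fin (n + 1))).domRestrict fun _ => e) :=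
    ⟨fun _ => he, fun i j hij => absurd (Subsingleton.elim i j) hij⟩
  obtain ⟨B, hB⟩ := hortho.exists_orthonormalBasis_extension_of_card_eq (by simpa using hn)
  exact ⟨B, hB 0 rfl⟩

theorem exists_vnorm2_isometry_sum_conj_mul_eq {q : ℕ} {u : Fin (q + 1) → ℂ} (hu : u ≠ 0) :
    ∃ L : (Fin (q + 1) → ℂ) ≃L[ℂ] (Fin (q + 1) → ℂ), (∀ x, vnorm2 (L x) = vnorm2 x) ∧
      ∀ x, ∑ k, conj (x k) * u k = vnorm2 u * conj (L x 0) := by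
  set n := vnorm2 u
  have hn : 0 < n := vnorm2_pos hu
  have he : ‖(n⁻¹ : ℂ) • WithLp.toLp 2 u‖ = 1 := by
    rw [norm_smul, ← vnorm2_eq_norm_toLp, norm_inv, Complex.norm_real,
      Real.norm_of_nonneg hn.le, inv_mul_cancel₀ hn.ne']
  obtain ⟨B, hB⟩ := OrthonormalBasis.exists_apply_zero_eq finrank_euclideanSpace_fin he
  let E := PiLp.continuousLinearEquiv 2 ℂ fun _ : Fin (q + 1) => ℂ
  refine ⟨E.symm.trans (B.repr.toContinuousLinearEquiv.trans E), fun x => ?_, fun x => ?_⟩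
  · change vnorm2 (B.repr (WithLp.toLp 2 x)).ofLp = vnorm2 x
    rw [vnorm2_eq_norm_toLp, vnorm2_eq_norm_toLp, WithLp.toLp_ofLp, LinearIsometryEquiv.norm_map]
  · have hL : (E.symm.trans (B.repr.toContinuousLinearEquiv.trans E)) x 0
        = n⁻¹ * ∑ k, conj (u k) * x k := by
      change B.repr (WithLp.toLp 2 x) 0 = _
      rw [B.repr_apply_apply, hB, inner_smul_left, PiLp.inner_apply]
      simp [mul_comm]
    rw [hL, map_mul, map_sum, ← mul_assoc]
    simp [hn.ne', mul_comm]

lemma norm_ofReal_mul_conj_add_lt_iff {c : ℝ} (hc : 0 < c) (w z : ℂ) (δ : ℝ) :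
    ‖(c : ℂ) * conj z + w‖ < δ ↔ z ∈ Metric.ball (-conj w / c) (δ / c) := by
  have hc' : (c : ℂ) ≠ 0 := by exact_mod_cast hc.ne'
  have h : (c : ℂ) * conj z + w = conj ((c : ℂ) * (z - -conj w / c)) := by
    simp only [map_mul, map_sub, map_neg, map_div₀, Complex.conj_conj, Complex.conj_ofReal]
    field_simp
    ring
  rw [h, Complex.norm_conj, norm_mul, Complex.norm_real, Real.norm_of_nonneg hc.le,
    Metric.mem_ball, dist_eq_norm, lt_div_iff₀ hc, mul_comm]

lemma volume_setOf_apply_zero_mem_inter_ballC_le {q : ℕ} (D : Set ℂ) (r : ℝ) :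
    volume ({y : Fin (q + 1) → ℂ | y 0 ∈ D} ∩ ballC (q + 1) r) ≤ volume D * volume (ballC q r) := by
  let e := MeasurableEquiv.piFinSuccAbove (fun _ : Fin (q + 1) => ℂ) 0
  have hsub : {y : Fin (q + 1) → ℂ | y 0 ∈ D} ∩ ballC (q + 1) r ⊆ e ⁻¹' (D ×ˢ ballC q r) :=
    fun y hy => ⟨hy.1, (vnorm2_tail_le y).trans hy.2⟩
  calc _ ≤ volume (e ⁻¹' (D ×ˢ ballC q r)) := measure_mono hsub
    _ = volume D * volume (ballC q r) := by
      rw [(volume_preserving_piFinSuccAbove _ 0).measure_preimage_equiv, Measure.volume_eq_prod,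
        Measure.prod_prod]

def slab {p : ℕ} (u : Fin p → ℂ) (w : ℂ) (δ : ℝ) : Set (Fin p → ℂ) :=
  {x | ‖∑ k, conj (x k) * u k + w‖ < δ}

lemma measurableSet_slab {p : ℕ} (u : Fin p → ℂ) (w : ℂ) (δ : ℝ) : MeasurableSet (slab u w δ) :=
  measurableSet_lt (by fun_prop) measurable_const

theorem volume_slab_inter_ballC_le {p : ℕ} {u : Fin p → ℂ} (hu : u ≠ 0) (w : ℂ) (δ r : ℝ) :
    volume (slab u w δ ∩ ballC p r)
      ≤ ENNReal.ofReal (δ / vnorm2 u) ^ 2 * NNReal.pi * volume (ballC (p - 1) r) := by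
  obtain ⟨q, rfl⟩ : ∃ q, p = q + 1 :=
    Nat.exists_eq_succ_of_ne_zero fun hp => hu (funext fun i => (hp ▸ i).elim0)
  obtain ⟨L, hL_vnorm2, hL_sum⟩ := exists_vnorm2_isometry_sum_conj_mul_eq hu
  have hn : 0 < vnorm2 u := vnorm2_pos hu
  have hL_volume : volume.map L = volume :=
    volume.map_addHaar_eq_self_of_preimage_eq L (measurableSet_ballC _ 1)
      (volume_ballC_pos _ one_pos).ne' (volume_ballC_lt_top _ 1).ne
      (by ext x; simp only [ballC, Set.mem_preimage, Set.mem_ofPred_eq, hL_vnorm2])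
  set D := Metric.ball (-conj w / vnorm2 u) (δ / vnorm2 u)
  have hrotate : slab u w δ ∩ ballC (q + 1) r = L ⁻¹' ({y | y 0 ∈ D} ∩ ballC (q + 1) r) := by
    ext x
    simp only [slab, ballC, Set.mem_inter_iff, Set.mem_preimage, Set.mem_ofPred_eq, hL_sum,
      hL_vnorm2, norm_ofReal_mul_conj_add_lt_iff hn, D]
  calc volume (slab u w δ ∩ ballC (q + 1) r)
      = volume ({y | y 0 ∈ D} ∩ ballC (q + 1) r) := by
        rw [hrotate, ← Measure.map_apply L.continuous.measurable, hL_volume]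
        exact (measurableSet_ball.preimage (measurable_pi_apply 0)).inter (measurableSet_ballC _ r)
    _ ≤ volume D * volume (ballC q r) := volume_setOf_apply_zero_mem_inter_ballC_le D r
    _ = _ := by rw [Complex.volume_ball, Nat.add_sub_cancel]

theorem measure_preimage_slab_le {Ω : Type*} [MeasurableSpace Ω] {μ : Measure Ω} {p : ℕ} {r : ℝ}
    (hr : 0 < r) {X : Ω → Fin p → ℂ} (hX : Measurable X) (hX_unif : μ.map X = volume[|ballC p r])
    {u : Fin p → ℂ} (hu : u ≠ 0) (w : ℂ) {δ : ℝ} (hδ : 0 ≤ δ) :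
    μ (X ⁻¹' slab u w δ)
      ≤ ENNReal.ofReal (Real.pi * Vball (p - 1) r / Vball p r * (δ / vnorm2 u) ^ 2) := by
  have hball_ne_zero := (volume_ballC_pos p hr).ne'
  have hball_ne_top := (volume_ballC_lt_top p r).ne
  have hVball_pos : 0 < Vball p r := ENNReal.toReal_pos hball_ne_zero hball_ne_top
  calc μ (X ⁻¹' slab u w δ) = (volume (ballC p r))⁻¹ * volume (slab u w δ ∩ ballC p r) := by
        rw [← Measure.map_apply hX (measurableSet_slab u w δ), hX_unif,
          cond_apply (measurableSet_ballC p r), Set.inter_comm]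
    _ ≤ (volume (ballC p r))⁻¹
          * (ENNReal.ofReal (δ / vnorm2 u) ^ 2 * NNReal.pi * volume (ballC (p - 1) r)) := by
        gcongr
        exact volume_slab_inter_ballC_le hu w δ r
    _ = _ := by
        have hratio : 0 ≤ δ / vnorm2 u := div_nonneg hδ (vnorm2_nonneg u)
        rw [← ofReal_Vball, ← ofReal_Vball, ← ENNReal.ofReal_pow hratio,
          ← ENNReal.ofReal_coe_nnreal, NNReal.coe_real_pi, ← ENNReal.ofReal_inv_of_pos hVball_pos,
          ← ENNReal.ofReal_mul (by positivity), ← ENNReal.ofReal_mul (by positivity),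
          ← ENNReal.ofReal_mul (by positivity)]
        congr 1
        ring

theorem stmt19_general {Ω : Type} [MeasureSpace Ω]
    {p m : ℕ} (r : ℝ) (hr : 0 < r)
    (a : Fin m → Ω → (Fin p → ℂ)) (hmeas : ∀ i, Measurable (a i))
    (hindep : iIndepFun a ℙ)
    (hdist : ∀ i, Measure.map (a i) ℙ = (volume[|ballC p r]))
    (u : Fin p → ℂ) (hu : u ≠ 0) (v : Fin m → ℂ) (δ : ℝ) (hδ : 0 < δ) :
    ℙ {ω : Ω | vnorm2 (fun i => (∑ k, (starRingEnd ℂ) (a i ω k) * u k) + v i) < δ}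
      ≤ ENNReal.ofReal ((Real.pi * Vball (p - 1) r / Vball p r) ^ m *
          δ ^ (2 * m) / vnorm2 u ^ (2 * m)) := by
  have hrows : {ω : Ω | vnorm2 (fun i => (∑ k, (starRingEnd ℂ) (a i ω k) * u k) + v i) < δ}
      ⊆ ⋂ i, a i ⁻¹' slab u (v i) δ :=
    fun ω hω => Set.mem_iInter.2 fun i => (norm_apply_le_vnorm2 _ i).trans_lt hω
  calc _ ≤ ℙ (⋂ i, a i ⁻¹' slab u (v i) δ) := measure_mono hrows
    _ = ∏ i, ℙ (a i ⁻¹' slab u (v i) δ) :=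
        hindep.meas_iInter fun i => ⟨_, measurableSet_slab u (v i) δ, rfl⟩
    _ ≤ ∏ _i : Fin m, ENNReal.ofReal (Real.pi * Vball (p - 1) r / Vball p r * (δ / vnorm2 u) ^ 2) :=
        Finset.prod_le_prod' fun i _ =>
          measure_preimage_slab_le hr (hmeas i) (hdist i) hu (v i) hδ.le
    _ = _ := by
        have hfactor : 0 ≤ Real.pi * Vball (p - 1) r / Vball p r * (δ / vnorm2 u) ^ 2 := by
          unfold Vball; positivity
        rw [Finset.prod_const, Finset.card_univ, Fintype.card_fin, ← ENNReal.ofReal_pow hfactor]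
        congr 1
        ring

theorem stmt19 {Ω : Type} [MeasureSpace Ω] [IsProbabilityMeasure (ℙ : Measure Ω)]
    {p m : ℕ} (r : ℝ) (hr : 0 < r)
    (a : Fin m → Ω → (Fin p → ℂ)) (hmeas : ∀ i, Measurable (a i))
    (hindep : iIndepFun a ℙ)
    (hdist : ∀ i, Measure.map (a i) ℙ = (volume[|ballC p r]))
    (u : Fin p → ℂ) (hu : u ≠ 0) (v : Fin m → ℂ) (δ : ℝ) (hδ : 0 < δ) :
    ℙ {ω : Ω | vnorm2 (fun i => (∑ k, (starRingEnd ℂ) (a i ω k) * u k) + v i) < δ}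
      ≤ ENNReal.ofReal ((Real.pi * Vball (p - 1) r / Vball p r) ^ m *
          δ ^ (2 * m) / vnorm2 u ^ (2 * m)) :=
  stmt19_general r hr a hmeas hindep hdist u hu v δ hδ
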